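/- arXiv:2107.03997 — 2 statements merged into one kernel-verified Lean document; each statement's English description precedes it below -/
import Mathlib

section
/- Let t : ℝ² → ℝ² be defined by t(p,s) = (1/(s·√(p²+s²)), 1/(p·√(p²+s²))). For all real numbers p > 0 and s > 0, the Euclidean norm of t(p,s) equals 1/(p·s); in particular, t maps every point of the hyperbola {(p,s) : p·s = c} (c > 0) onto the circle of radius 1/c centered at the origin. -/
/-- The transformation `t(p,s) = (1/(s·√(p²+s²)), 1/(p·√(p²+s²)))`. -/
noncomputable def probSimTransform (p s : ℝ) : ℝ × ℝ :=
  (1 / (s * Real.sqrt (p ^ 2 + s ^ 2)), 1 / (p * Real.sqrt (p ^ 2 + s ^ 2)))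

/-- The Euclidean norm of a point `(x, y) ∈ ℝ²` is `√(x² + y²)`. -/
noncomputable def euclNorm2 (v : ℝ × ℝ) : ℝ :=
  Real.sqrt (v.1 ^ 2 + v.2 ^ 2)

lemma main_aux (p s : ℝ) (hp : 0 < p) (hs : 0 < s) :
    euclNorm2 (probSimTransform p s) = 1 / (p * s) := by
  have hsum : 0 < p ^ 2 + s ^ 2 := by positivity
  have hr : Real.sqrt (p ^ 2 + s ^ 2) ^ 2 = p ^ 2 + s ^ 2 := Real.sq_sqrt hsum.le
  have hrpos : 0 < Real.sqrt (p ^ 2 + s ^ 2) := Real.sqrt_pos.mpr hsum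
  unfold euclNorm2 probSimTransform
  simp only
  have key : 1 / (s * Real.sqrt (p ^ 2 + s ^ 2)) ^ 2
      + 1 / (p * Real.sqrt (p ^ 2 + s ^ 2)) ^ 2 = (1 / (p * s)) ^ 2 := by
    have h4 : Real.sqrt (p ^ 2 + s ^ 2) ^ 4 = (p ^ 2 + s ^ 2) ^ 2 := by
      rw [show (4:ℕ) = 2*2 by rfl, pow_mul, hr]
    field_simp
    ring_nf
    simp only [hr, h4]
  rw [div_pow, div_pow, one_pow, key, Real.sqrt_sq (by positivity)]

theorem transform_norm_eq_inv_prod :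
    (∀ p s : ℝ, 0 < p → 0 < s →
      euclNorm2 (probSimTransform p s) = 1 / (p * s)) ∧
    (∀ c : ℝ, 0 < c → ∀ p s : ℝ, 0 < p → 0 < s → p * s = c →
      euclNorm2 (probSimTransform p s) = 1 / c) := by
  refine ⟨main_aux, fun c hc p s hp hs hpc => hpc ▸ main_aux p s hp hs⟩
end

section
/- Let t : ℝ² → ℝ² be defined by t(p,s) = (1/(s·√(p²+s²)), 1/(p·√(p²+s²))). For all real numbers p > 0, s > 0 and every k with 0 < k ≤ 1, the product p·s is at least k if and only if the Euclidean distance of t(p,s) from the origin is at most 1/k. -/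
/-! The two squared coordinates of `t(p,s)` add up to `(p² + s²) / (p² s² (p² + s²)) = 1 / (p s)²`,
so `t` maps the hyperbola `p s = c` onto the circle of radius `1 / c`. -/

lemma probSimTransform_fst_sq_add_snd_sq {p s : ℝ} (hp : p ≠ 0) (hs : s ≠ 0) :
    (probSimTransform p s).1 ^ 2 + (probSimTransform p s).2 ^ 2 = (1 / (p * s)) ^ 2 := by
  have hq : 0 < p ^ 2 + s ^ 2 := by positivity
  simp only [probSimTransform, div_pow, mul_pow, Real.sq_sqrt hq.le]
  field_simp

lemma euclNorm2_probSimTransform {p s : ℝ} (hp : p ≠ 0) (hs : s ≠ 0) :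
    euclNorm2 (probSimTransform p s) = 1 / |p * s| := by
  rw [euclNorm2, probSimTransform_fst_sq_add_snd_sq hp hs, Real.sqrt_sq_eq_abs, abs_div, abs_one]

theorem prod_ge_iff_transform_dist_le_general (p s k : ℝ) (hp : 0 < p) (hs : 0 < s)
    (hk0 : 0 < k) :
    k ≤ p * s ↔ euclNorm2 (probSimTransform p s) ≤ 1 / k := by
  have hps : 0 < p * s := mul_pos hp hs
  rw [euclNorm2_probSimTransform hp.ne' hs.ne', abs_of_pos hps, one_div_le_one_div hps hk0]

theorem prod_ge_iff_transform_dist_le (p s k : ℝ) (hp : 0 < p) (hs : 0 < s)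
    (hk0 : 0 < k) (hk1 : k ≤ 1) :
    k ≤ p * s ↔ euclNorm2 (probSimTransform p s) ≤ 1 / k :=
  prod_ge_iff_transform_dist_le_general p s k hp hs hk0
end
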